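/- arXiv:1802.06132 — 3 statements merged into one kernel-verified Lean document; each statement's English description precedes it below -/
import Mathlib

section
/- Let A ∈ ℝ^{p×p} and B ∈ ℝ^{q×q} be symmetric positive definite, C ∈ ℝ^{p×q}, K = [[A, C], [-Cᵀ, B]], α = λ_min(diag(A², B²)) and β = λ_max of F := [[A² + CCᵀ, -AC + CB], [-CᵀA + BCᵀ, B² + CᵀC]]. If η = √α/β, then the operator norm satisfies ‖I - ηK‖_op ≤ √(1 - α/β). -/
open Matrix
noncomputable section

/-- Largest eigenvalue (for symmetric matrices: sup of real spectrum). -/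
def lamMax {n : Type*} [Fintype n] [DecidableEq n] (M : Matrix n n ℝ) : ℝ :=
  sSup (spectrum ℝ M)

/-- Smallest eigenvalue (for symmetric matrices: inf of real spectrum). -/
def lamMin {n : Type*} [Fintype n] [DecidableEq n] (M : Matrix n n ℝ) : ℝ :=
  sInf (spectrum ℝ M)

/-- Operator (spectral) norm of a square real matrix. -/
def opNorm {n : Type*} [Fintype n] [DecidableEq n] (M : Matrix n n ℝ) : ℝ :=
  ‖toEuclideanCLM (𝕜 := ℝ) M‖

open Classical in
/-- Positive semidefinite square root (junk value `0` if `M` is not PSD). -/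
def msqrt {n : Type*} [Fintype n] [DecidableEq n] (M : Matrix n n ℝ) : Matrix n n ℝ :=
  if h : M.PosSemidef then (h.1.eigenvectorUnitary : Matrix n n ℝ) *
    diagonal ((↑) ∘ (√·) ∘ h.1.eigenvalues) * (star h.1.eigenvectorUnitary : Matrix n n ℝ) else 0

/-!
Put `D = diag(A, B)`. Then `K + Kᵀ = 2 D` and `K Kᵀ = F`, so in the Loewner order
`(I - ηK)(I - ηK)ᵀ = I - 2η D + η² F ≤ (1 - 2η √α + η² β) I`,
because `√α I ≤ D` (as `D ≥ 0` and every eigenvalue of `D²` is at least `α`) and `F ≤ β I`.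
For `η = √α / β` the scalar is `1 - α / β`, and `M Mᵀ ≤ c I` forces `‖M‖ ≤ √c`.
-/

open scoped MatrixOrder

namespace Matrix

variable {m l R : Type*}

lemma PosSemidef.fromBlocks_zero [Fintype m] [Fintype l] [CommRing R] [PartialOrder R] [StarRing R] [StarOrderedRing R]
    {A : Matrix m m R} {B : Matrix l l R} (hA : A.PosSemidef) (hB : B.PosSemidef) :
    (fromBlocks A 0 0 B).PosSemidef := by
  refine posSemidef_iff_dotProduct_mulVec.mpr ⟨hA.1.fromBlocks (by simp) hB.1, fun x ↦ ?_⟩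
  simp only [fromBlocks_mulVec, zero_mulVec, add_zero, zero_add, dotProduct_block,
    Sum.elim_comp_inl, Sum.elim_comp_inr]
  exact add_nonneg (hA.dotProduct_mulVec_nonneg (x ∘ Sum.inl))
    (hB.dotProduct_mulVec_nonneg (x ∘ Sum.inr))

variable [CommRing R] {A : Matrix m m R} {B : Matrix l l R}

lemma fromBlocks_skew_add_transpose (hA : Aᵀ = A) (hB : Bᵀ = B) (C : Matrix m l R) :
    fromBlocks A C (-Cᵀ) B + (fromBlocks A C (-Cᵀ) B)ᵀ = (2 : R) • fromBlocks A 0 0 B := by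
  rw [fromBlocks_transpose, transpose_neg, transpose_transpose, hA, hB, fromBlocks_add]
  simp [two_smul, fromBlocks_add]

variable [Fintype m] [Fintype l] [DecidableEq m] [DecidableEq l]

lemma fromBlocks_skew_mul_transpose (hA : Aᵀ = A) (hB : Bᵀ = B) (C : Matrix m l R) :
    fromBlocks A C (-Cᵀ) B * (fromBlocks A C (-Cᵀ) B)ᵀ =
      fromBlocks (A ^ 2 + C * Cᵀ) (-(A * C) + C * B) (-(Cᵀ * A) + B * Cᵀ) (B ^ 2 + Cᵀ * C) := by
  rw [fromBlocks_transpose, transpose_neg, transpose_transpose, hA, hB, fromBlocks_multiply]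
  simp [sq, add_comm]

lemma fromBlocks_zero_sq (A : Matrix m m R) (B : Matrix l l R) :
    fromBlocks A 0 0 B ^ 2 = fromBlocks (A ^ 2) 0 0 (B ^ 2) := by
  simp [sq, fromBlocks_multiply]

end Matrix

section
variable {n : Type*} [Fintype n] [DecidableEq n]

lemma le_lamMax_smul_one {M : Matrix n n ℝ} (hM : M.IsHermitian) : M ≤ lamMax M • 1 := by
  rw [← Algebra.algebraMap_eq_smul_one]
  exact le_algebraMap_of_spectrum_le
    (fun _ hx ↦ le_csSup finite_real_spectrum.bddAbove hx) hM.isSelfAdjoint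

lemma lamMax_nonneg {M : Matrix n n ℝ} (hM : M.PosSemidef) : 0 ≤ lamMax M :=
  Real.sSup_nonneg fun _ hx ↦ spectrum_nonneg_of_nonneg hM.nonneg hx

lemma lamMin_nonneg {M : Matrix n n ℝ} (hM : M.PosSemidef) : 0 ≤ lamMin M :=
  Real.sInf_nonneg fun _ hx ↦ spectrum_nonneg_of_nonneg hM.nonneg hx

lemma sqrt_lamMin_sq_smul_one_le {D : Matrix n n ℝ} (hD : D.PosSemidef) :
    √(lamMin (D ^ 2)) • 1 ≤ D := by
  have hD' : IsSelfAdjoint D := hD.isHermitian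
  rw [← Algebra.algebraMap_eq_smul_one]
  refine algebraMap_le_of_le_spectrum (fun x hx ↦ ?_) hD'
  have hsq : x ^ 2 ∈ spectrum ℝ (D ^ 2) := by
    rw [← cfc_pow_id (R := ℝ) D 2 hD', cfc_map_spectrum _ _ hD']
    exact ⟨x, hx, rfl⟩
  calc √(lamMin (D ^ 2)) ≤ √(x ^ 2) :=
        Real.sqrt_le_sqrt (csInf_le finite_real_spectrum.bddBelow hsq)
    _ = x := Real.sqrt_sq (spectrum_nonneg_of_nonneg hD.nonneg hx)

open scoped Matrix.Norms.L2Operator in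
lemma opNorm_transpose (M : Matrix n n ℝ) : opNorm Mᵀ = opNorm M :=
  l2_opNorm_conjTranspose M

lemma opNorm_le_sqrt_of_transpose_mul_self_le {M : Matrix n n ℝ} {c : ℝ} (h : Mᵀ * M ≤ c • 1) :
    opNorm M ≤ √c := by
  refine ContinuousLinearMap.opNorm_le_bound _ (Real.sqrt_nonneg c) fun x ↦ ?_
  have hquad : (M *ᵥ x.ofLp) ⬝ᵥ (M *ᵥ x.ofLp) ≤ c * (x.ofLp ⬝ᵥ x.ofLp) := by
    simpa [sub_mulVec, smul_mulVec, dotProduct_mulVec, vecMul_transpose, ← mulVec_mulVec] using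
      (le_iff.mp h).dotProduct_mulVec_nonneg x.ofLp
  have hnorm (v : EuclideanSpace ℝ n) : ‖v‖ ^ 2 = v.ofLp ⬝ᵥ v.ofLp := by
    rw [← real_inner_self_eq_norm_sq, EuclideanSpace.inner_eq_star_dotProduct, star_trivial]
  rw [← Real.sqrt_sq (norm_nonneg x), ← Real.sqrt_mul' _ (sq_nonneg _)]
  refine Real.le_sqrt_of_sq_le ?_
  rwa [hnorm, hnorm]

lemma opNorm_le_sqrt_of_mul_transpose_le {M : Matrix n n ℝ} {c : ℝ} (h : M * Mᵀ ≤ c • 1) :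
    opNorm M ≤ √c := by
  rw [← opNorm_transpose]
  exact opNorm_le_sqrt_of_transpose_mul_self_le (by rwa [transpose_transpose])

lemma opNorm_one_sub_smul_le {K : Matrix n n ℝ} {s b η : ℝ} (hη : 0 ≤ η)
    (hs : (2 * s) • 1 ≤ K + Kᵀ) (hb : K * Kᵀ ≤ b • 1) :
    opNorm (1 - η • K) ≤ √(1 - 2 * η * s + η ^ 2 * b) := by
  apply opNorm_le_sqrt_of_mul_transpose_le
  calc (1 - η • K) * (1 - η • K)ᵀ = 1 - η • (K + Kᵀ) + η ^ 2 • (K * Kᵀ) := by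
        simp only [transpose_sub, transpose_one, transpose_smul, sub_mul, mul_sub, one_mul,
          mul_one, smul_mul_smul_comm]
        module
    _ ≤ 1 - η • ((2 * s) • 1) + η ^ 2 • (b • 1) := by gcongr
    _ = (1 - 2 * η * s + η ^ 2 * b) • (1 : Matrix n n ℝ) := by module

end

theorem stmt1 {p q : ℕ} (A : Matrix (Fin p) (Fin p) ℝ) (B : Matrix (Fin q) (Fin q) ℝ)
    (C : Matrix (Fin p) (Fin q) ℝ) (hA : A.PosDef) (hB : B.PosDef)
    (K : Matrix (Fin p ⊕ Fin q) (Fin p ⊕ Fin q) ℝ) (hK : K = fromBlocks A C (-Cᵀ) B)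
    (α β η : ℝ)
    (hα : α = lamMin (fromBlocks (A ^ 2) 0 0 (B ^ 2)))
    (hβ : β = lamMax (fromBlocks (A ^ 2 + C * Cᵀ) (-(A * C) + C * B)
      (-(Cᵀ * A) + B * Cᵀ) (B ^ 2 + Cᵀ * C)))
    (hη : η = Real.sqrt α / β) :
    opNorm (1 - η • K) ≤ Real.sqrt (1 - α / β) := by
  have hAt : Aᵀ = A := hA.isHermitian
  have hBt : Bᵀ = B := hB.isHermitian
  have hD : (fromBlocks A 0 0 B).PosSemidef := hA.posSemidef.fromBlocks_zero hB.posSemidef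
  rw [← fromBlocks_zero_sq] at hα
  rw [← fromBlocks_skew_mul_transpose hAt hBt, ← hK] at hβ
  have hs : (2 * √α) • 1 ≤ K + Kᵀ := by
    rw [hK, fromBlocks_skew_add_transpose hAt hBt, mul_smul]
    exact smul_le_smul_of_nonneg_left (hα ▸ sqrt_lamMin_sq_smul_one_le hD) zero_le_two
  have hb : K * Kᵀ ≤ β • 1 := hβ ▸ le_lamMax_smul_one (isHermitian_mul_conjTranspose_self K)
  have hα0 : 0 ≤ α := hα ▸ lamMin_nonneg (hD.pow 2)
  have hβ0 : 0 ≤ β := hβ ▸ lamMax_nonneg (posSemidef_self_mul_conjTranspose K)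
  have hη0 : 0 ≤ η := by rw [hη]; positivity
  convert opNorm_one_sub_smul_le hη0 hs hb using 2
  rcases hβ0.eq_or_lt with rfl | hβpos
  · -- `β = 0` only for `p = q = 0`; then `η = 0` and `α / β = 0`
    simp [hη]
  · rw [hη]
    field_simp
    rw [Real.sq_sqrt hα0]
    ring
end
end

section
/- Let C ∈ ℝ^{p×p} be full rank, γ > 0, and η = γλ_min(CCᵀ)/(λ_max(CCᵀ) + γ²λ_max(CCᵀ)²). Then λ_max((I - ηγCCᵀ)² + η²CCᵀ) ≤ 1 - γ²λ_min(CCᵀ)²/(γ²λ_max(CCᵀ)² + λ_max(CCᵀ)). -/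
open Matrix
noncomputable section

/-! A step of size `η` contracts the eigenvalue `x ∈ [m, ℓ]` of `CCᵀ` to
`(1 - ηγx)² + η²x ≤ 1 - 2γηx + (γ²ℓ² + ℓ)η²`, and the prescribed `η` minimises the
right-hand side at `x = m`. By the spectral mapping theorem this bounds every eigenvalue of
`(1 - ηγCCᵀ)² + η²CCᵀ`. -/

section Scalar

variable {γ η m ℓ x : ℝ}

lemma step_contraction_le (hm : 0 ≤ m) (hmx : m ≤ x) (hxℓ : x ≤ ℓ)
    (hη : η = γ * m / (ℓ + γ ^ 2 * ℓ ^ 2)) :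
    (1 - η * γ * x) ^ 2 + η ^ 2 * x ≤ 1 - γ ^ 2 * m ^ 2 / (γ ^ 2 * ℓ ^ 2 + ℓ) := by
  have hx : 0 ≤ x := hm.trans hmx
  have hℓ : 0 ≤ ℓ := hx.trans hxℓ
  rw [add_comm ℓ] at hη
  set D := γ ^ 2 * ℓ ^ 2 + ℓ with hD
  rcases (show 0 ≤ D by positivity).eq_or_lt with hD0 | hDpos
  · simp [hη, ← hD0]
  have hηγ : 0 ≤ η * γ := by
    rw [hη, div_mul_eq_mul_div, mul_right_comm, ← sq]
    positivity
  calc (1 - η * γ * x) ^ 2 + η ^ 2 * x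
      = 1 - 2 * (η * γ) * x + η ^ 2 * (γ ^ 2 * x ^ 2 + x) := by ring
    _ ≤ 1 - 2 * (η * γ) * m + η ^ 2 * D := by
        have hxD : γ ^ 2 * x ^ 2 + x ≤ D := by rw [hD]; gcongr
        gcongr
    _ = 1 - γ ^ 2 * m ^ 2 / D := by rw [hη]; field_simp; ring

lemma one_sub_div_nonneg_of_le (hm : 0 ≤ m) (hmℓ : m ≤ ℓ) :
    0 ≤ 1 - γ ^ 2 * m ^ 2 / (γ ^ 2 * ℓ ^ 2 + ℓ) := by
  have hℓ : 0 ≤ ℓ := hm.trans hmℓ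
  rw [sub_nonneg]
  apply div_le_one_of_le₀ _ (by positivity)
  have : m ^ 2 ≤ ℓ ^ 2 := pow_le_pow_left₀ hm hmℓ 2
  nlinarith [sq_nonneg γ]

end Scalar

section Spectrum

variable {n : Type*} [Fintype n] [DecidableEq n]

lemma le_lamMax {A : Matrix n n ℝ} {x : ℝ} (hx : x ∈ spectrum ℝ A) : x ≤ lamMax A :=
  le_csSup finite_real_spectrum.bddAbove hx

lemma lamMin_le {A : Matrix n n ℝ} {x : ℝ} (hx : x ∈ spectrum ℝ A) : lamMin A ≤ x :=
  csInf_le finite_real_spectrum.bddBelow hx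

lemma lamMin_le_lamMax (A : Matrix n n ℝ) : lamMin A ≤ lamMax A :=
  Real.sInf_le_sSup _ finite_real_spectrum.bddBelow finite_real_spectrum.bddAbove

lemma Matrix.PosSemidef.lamMin_nonneg {A : Matrix n n ℝ} (hA : A.PosSemidef) : 0 ≤ lamMin A := by
  open scoped MatrixOrder in
  exact Real.sInf_nonneg fun _ hx ↦ spectrum_nonneg_of_nonneg hA.nonneg hx

lemma lamMax_cfc_le {A : Matrix n n ℝ} (hA : A.IsHermitian) {f : ℝ → ℝ} {c : ℝ}
    (hf : ∀ x ∈ spectrum ℝ A, f x ≤ c) (hc : 0 ≤ c)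
    (hf_cont : ContinuousOn f (spectrum ℝ A) := by fun_prop) : lamMax (cfc f A) ≤ c := by
  rw [lamMax, cfc_map_spectrum f A]
  exact Real.sSup_le (by rintro _ ⟨x, hx, rfl⟩; exact hf x hx) hc

end Spectrum

lemma cfc_one_sub_mul_sq_add_mul {n : Type*} [Fintype n] [DecidableEq n] {A : Matrix n n ℝ}
    (hA : A.IsHermitian) (a b : ℝ) :
    cfc (fun x ↦ (1 - a * x) ^ 2 + b * x) A = (1 - a • A) ^ 2 + b • A := by
  rw [cfc_add .., cfc_pow .., cfc_sub .., cfc_const_mul .., cfc_const_mul .., cfc_id' ..,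
    cfc_const_one ..]

theorem stmt13_general {p : ℕ} (C : Matrix (Fin p) (Fin p) ℝ) (γ η : ℝ)
    (hη : η = γ * lamMin (C * Cᵀ) / (lamMax (C * Cᵀ) + γ ^ 2 * lamMax (C * Cᵀ) ^ 2)) :
    lamMax ((1 - (η * γ) • (C * Cᵀ)) ^ 2 + (η ^ 2) • (C * Cᵀ)) ≤
      1 - γ ^ 2 * lamMin (C * Cᵀ) ^ 2 / (γ ^ 2 * lamMax (C * Cᵀ) ^ 2 + lamMax (C * Cᵀ)) := by
  have hA : (C * Cᵀ).PosSemidef := by simpa using posSemidef_self_mul_conjTranspose C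
  have hm : 0 ≤ lamMin (C * Cᵀ) := hA.lamMin_nonneg
  rw [← cfc_one_sub_mul_sq_add_mul hA.isHermitian]
  exact lamMax_cfc_le hA.isHermitian
    (fun x hx ↦ step_contraction_le hm (lamMin_le hx) (le_lamMax hx) hη)
    (one_sub_div_nonneg_of_le hm (lamMin_le_lamMax _))

theorem stmt13 {p : ℕ} (C : Matrix (Fin p) (Fin p) ℝ) (hC : C.rank = p) (γ η : ℝ)
    (hγ : 0 < γ)
    (hη : η = γ * lamMin (C * Cᵀ) / (lamMax (C * Cᵀ) + γ ^ 2 * lamMax (C * Cᵀ) ^ 2)) :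
    lamMax ((1 - (η * γ) • (C * Cᵀ)) ^ 2 + (η ^ 2) • (C * Cᵀ)) ≤
      1 - γ ^ 2 * lamMin (C * Cᵀ) ^ 2 / (γ ^ 2 * lamMax (C * Cᵀ) ^ 2 + lamMax (C * Cᵀ)) :=
  stmt13_general C γ η hη
end
end

section
/- Let C ∈ ℝ^{p×p} be full rank, γ > 0, η = γλ_min(CCᵀ)/(λ_max(CCᵀ) + γ²λ_max(CCᵀ)²), and consider the iterates z_{t+1} = [[I - ηγCCᵀ, -ηC], [ηCᵀ, I - ηγCᵀC]]z_t with ‖z₀‖ ≤ r. Then ‖z_T‖ ≤ ε whenever T ≥ ⌈2·((γ²λ_max(CCᵀ)² + λ_max(CCᵀ))/(γ²λ_min(CCᵀ)²))·log(r/ε)⌉. -/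
open Matrix
noncomputable section

/-!
Write `S₁ = C Cᵀ`, `S₂ = Cᵀ C`. Since `(1 - ηγ S₁) C = C (1 - ηγ S₂)`, the off-diagonal blocks of
`Kᵀ K` cancel and `Kᵀ K = diag((1 - ηγ Sᵢ)² + η² Sᵢ)`. Both `Sᵢ` have the spectrum of `C Cᵀ`, which
lies in `[λ_min, λ_max]` with `λ_min > 0` by full rank, and for the chosen `η` the scalar function
`(1 - ηγμ)² + η²μ` is at most `1 - x` there, `x = γ²λ_min² / (γ²λ_max² + λ_max)`. The functional
calculus turns this into `Kᵀ K ≤ (1 - x) • 1`, i.e. `‖K‖ ≤ √(1 - x)`, and then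
`‖z_T‖ ≤ (1 - x)^(T/2) r ≤ exp (-xT/2) r ≤ ε`.
-/

open scoped MatrixOrder ComplexOrder

namespace Matrix

theorem isUnit_of_rank_eq_card {n K : Type*} [Fintype n] [DecidableEq n] [Field K]
    {A : Matrix n n K} (hA : A.rank = Fintype.card n) : IsUnit A := by
  have hrange : LinearMap.range A.mulVecLin = ⊤ := Submodule.eq_top_of_finrank_eq <| by
    rw [← rank, hA, Module.finrank_fintype_fun_eq_card]
  exact mulVec_surjective_iff_isUnit.mp (LinearMap.range_eq_top.mp hrange)

theorem spectrum_mul_comm {n K : Type*} [Fintype n] [DecidableEq n] [Field K]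
    (A B : Matrix n n K) : spectrum K (A * B) = spectrum K (B * A) := by
  ext μ
  simp only [mem_spectrum_iff_isRoot_charpoly, charpoly_mul_comm]

theorem spectrum_subset_Icc_lamMin_lamMax {n : Type*} [Fintype n] [DecidableEq n]
    (A : Matrix n n ℝ) : spectrum ℝ A ⊆ Set.Icc (lamMin A) (lamMax A) := fun _ hμ =>
  ⟨csInf_le A.finite_real_spectrum.bddBelow hμ, le_csSup A.finite_real_spectrum.bddAbove hμ⟩

theorem IsHermitian.lamMin_mem_spectrum {n : Type*} [Fintype n] [DecidableEq n] [Nonempty n]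
    {A : Matrix n n ℝ} (hA : A.IsHermitian) : lamMin A ∈ spectrum ℝ A := by
  refine Set.Nonempty.csInf_mem ?_ A.finite_real_spectrum
  rw [hA.spectrum_real_eq_range_eigenvalues]
  exact Set.range_nonempty _

theorem PosDef.lamMin_pos {n : Type*} [Fintype n] [DecidableEq n] [Nonempty n]
    {A : Matrix n n ℝ} (hA : A.PosDef) : 0 < lamMin A :=
  hA.isStrictlyPositive.spectrum_pos hA.1.lamMin_mem_spectrum

theorem PosSemidef.fromBlocks_zero_s15 {𝕜 m n : Type*} [RCLike 𝕜] [Fintype m] [Fintype n]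
    {A : Matrix m m 𝕜} {D : Matrix n n 𝕜} (hA : A.PosSemidef) (hD : D.PosSemidef) :
    (fromBlocks A 0 0 D).PosSemidef := by
  refine .of_dotProduct_mulVec_nonneg (.fromBlocks hA.1 (by simp) hD.1) fun x => ?_
  rw [fromBlocks_mulVec, dotProduct_block]
  simp only [zero_mulVec, add_zero, zero_add, Sum.elim_comp_inl, Sum.elim_comp_inr]
  exact add_nonneg (hA.dotProduct_mulVec_nonneg (x ∘ Sum.inl))
    (hD.dotProduct_mulVec_nonneg (x ∘ Sum.inr))

theorem fromBlocks_zero_le_fromBlocks_zero {𝕜 m n : Type*} [RCLike 𝕜] [Fintype m] [Fintype n]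
    {A A' : Matrix m m 𝕜} {D D' : Matrix n n 𝕜} (hA : A ≤ A') (hD : D ≤ D') :
    fromBlocks A 0 0 D ≤ fromBlocks A' 0 0 D' := by
  rw [le_iff, sub_eq_add_neg, fromBlocks_neg, fromBlocks_add]
  simpa [← sub_eq_add_neg] using (le_iff.mp hA).fromBlocks_zero_s15 (le_iff.mp hD)

theorem IsHermitian.one_sub_smul_mul_self_add_smul_le {𝕜 n : Type*} [RCLike 𝕜] [Fintype n]
    [DecidableEq n] {S : Matrix n n 𝕜} (hS : S.IsHermitian) {a b c : ℝ}
    (h : ∀ μ ∈ spectrum ℝ S, (1 - a * μ) ^ 2 + b * μ ≤ c) :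
    (1 - a • S) * (1 - a • S) + b • S ≤ c • 1 := by
  have hS' : IsSelfAdjoint S := hS
  have hcfc : (1 - a • S) * (1 - a • S) + b • S = cfc (fun μ => (1 - a * μ) ^ 2 + b * μ) S := by
    rw [cfc_add .., cfc_pow .., cfc_sub .., cfc_const_one .., cfc_const_mul .., cfc_const_mul ..,
      cfc_id' .., sq]
  rw [hcfc, ← Algebra.algebraMap_eq_smul_one]
  exact cfc_le_algebraMap _ c S h

theorem transpose_fromBlocks_mul_self {R m n : Type*} [Fintype m] [Fintype n] [DecidableEq m]
    [DecidableEq n] [CommRing R] (C : Matrix m n R) (a b : R) :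
    (fromBlocks (1 - a • (C * Cᵀ)) (-(b • C)) (b • Cᵀ) (1 - a • (Cᵀ * C)))ᵀ *
      fromBlocks (1 - a • (C * Cᵀ)) (-(b • C)) (b • Cᵀ) (1 - a • (Cᵀ * C)) =
    fromBlocks ((1 - a • (C * Cᵀ)) * (1 - a • (C * Cᵀ)) + b ^ 2 • (C * Cᵀ)) 0 0
      ((1 - a • (Cᵀ * C)) * (1 - a • (Cᵀ * C)) + b ^ 2 • (Cᵀ * C)) := by
  simp only [fromBlocks_transpose, fromBlocks_multiply, transpose_sub, transpose_one,
    transpose_smul, transpose_mul, transpose_transpose, transpose_neg]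
  congr 1 <;>
    simp only [Matrix.sub_mul, Matrix.mul_sub, Matrix.smul_mul, Matrix.mul_smul, Matrix.one_mul,
      Matrix.mul_one, Matrix.neg_mul, Matrix.mul_neg, Matrix.mul_assoc, smul_smul] <;>
    module

theorem norm_toEuclideanCLM_apply_sq {n : Type*} [Fintype n] [DecidableEq n] (K : Matrix n n ℝ)
    (v : EuclideanSpace ℝ n) :
    ‖toEuclideanCLM (𝕜 := ℝ) K v‖ ^ 2 = v.ofLp ⬝ᵥ (Kᵀ * K) *ᵥ v.ofLp := by
  rw [← real_inner_self_eq_norm_sq, inner_toEuclideanCLM, ofLp_toEuclideanCLM, ← mulVec_mulVec,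
    dotProduct_mulVec v.ofLp, vecMul_transpose]

theorem opNorm_le_sqrt_of_transpose_mul_self_le {n : Type*} [Fintype n] [DecidableEq n]
    {K : Matrix n n ℝ} {c : ℝ} (h : Kᵀ * K ≤ c • 1) : opNorm K ≤ √c := by
  refine ContinuousLinearMap.opNorm_le_bound _ (Real.sqrt_nonneg c) fun v => ?_
  have hq := (le_iff.mp h).dotProduct_mulVec_nonneg v.ofLp
  rw [sub_mulVec, dotProduct_sub, smul_mulVec, one_mulVec, dotProduct_smul, star_trivial,
    sub_nonneg, ← norm_toEuclideanCLM_apply_sq, smul_eq_mul] at hq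
  have hv : v.ofLp ⬝ᵥ v.ofLp = ‖v‖ ^ 2 := by simpa using (norm_toEuclideanCLM_apply_sq 1 v).symm
  calc ‖toEuclideanCLM (𝕜 := ℝ) K v‖ ≤ √(c * ‖v‖ ^ 2) := Real.le_sqrt_of_sq_le (hv ▸ hq)
    _ = √c * ‖v‖ := by rw [Real.sqrt_mul' _ (sq_nonneg _), Real.sqrt_sq (norm_nonneg _)]

theorem opNorm_fromBlocks_le_sqrt {m n : Type*} [Fintype m] [Fintype n] [DecidableEq m]
    [DecidableEq n] (C : Matrix m n ℝ) {a b c : ℝ}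
    (hCCt : ∀ μ ∈ spectrum ℝ (C * Cᵀ), (1 - a * μ) ^ 2 + b ^ 2 * μ ≤ c)
    (hCtC : ∀ μ ∈ spectrum ℝ (Cᵀ * C), (1 - a * μ) ^ 2 + b ^ 2 * μ ≤ c) :
    opNorm (fromBlocks (1 - a • (C * Cᵀ)) (-(b • C)) (b • Cᵀ) (1 - a • (Cᵀ * C))) ≤ √c := by
  refine opNorm_le_sqrt_of_transpose_mul_self_le ?_
  rw [transpose_fromBlocks_mul_self, ← fromBlocks_one, fromBlocks_smul, smul_zero, smul_zero]
  have hCCt' : (C * Cᵀ).IsHermitian := by simpa using isHermitian_mul_conjTranspose_self C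
  have hCtC' : (Cᵀ * C).IsHermitian := by simpa using isHermitian_mul_conjTranspose_self Cᵀ
  exact fromBlocks_zero_le_fromBlocks_zero (hCCt'.one_sub_smul_mul_self_add_smul_le hCCt)
    (hCtC'.one_sub_smul_mul_self_add_smul_le hCtC)

end Matrix

theorem ContinuousLinearMap.norm_orbit_le_opNorm_pow_mul {𝕜 E : Type*}
    [NontriviallyNormedField 𝕜] [SeminormedAddCommGroup E] [NormedSpace 𝕜 E] (f : E →L[𝕜] E)
    {z : ℕ → E} (hz : ∀ t, z (t + 1) = f (z t)) (t : ℕ) : ‖z t‖ ≤ ‖f‖ ^ t * ‖z 0‖ := by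
  induction t with
  | zero => simp
  | succ t ih =>
    calc ‖z (t + 1)‖ ≤ ‖f‖ * ‖z t‖ := hz t ▸ f.le_opNorm (z t)
      _ ≤ ‖f‖ * (‖f‖ ^ t * ‖z 0‖) := by gcongr
      _ = ‖f‖ ^ (t + 1) * ‖z 0‖ := by ring

theorem one_sub_mul_sq_add_sq_mul_le {γ L M μ η : ℝ} (hγ : 0 < γ) (hL : 0 < L) (hLμ : L ≤ μ)
    (hμM : μ ≤ M) (hη : η = γ * L / (M + γ ^ 2 * M ^ 2)) :
    (1 - η * γ * μ) ^ 2 + η ^ 2 * μ ≤ 1 - γ ^ 2 * L ^ 2 / (γ ^ 2 * M ^ 2 + M) := by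
  have hM : 0 < M := by linarith
  have hη0 : 0 < η := by rw [hη]; positivity
  have hηγL : η * γ * L = γ ^ 2 * L ^ 2 / (γ ^ 2 * M ^ 2 + M) := by
    rw [hη]; field_simp; ring
  have hηM : η * (1 + γ ^ 2 * M) ≤ γ := by
    rw [hη, div_mul_eq_mul_div, div_le_iff₀ (by positivity)]
    nlinarith [mul_le_mul_of_nonneg_left (hLμ.trans hμM) (by positivity : 0 ≤ γ * (1 + γ ^ 2 * M))]
  calc (1 - η * γ * μ) ^ 2 + η ^ 2 * μ
      = 1 - 2 * (η * γ * μ) + η * μ * (η * (1 + γ ^ 2 * μ)) := by ring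
    _ ≤ 1 - 2 * (η * γ * μ) + η * μ * γ := by
      have hμ : 0 < μ := hL.trans_le hLμ
      gcongr 1 - 2 * (η * γ * μ) + η * μ * ?_
      exact le_trans (by gcongr) hηM
    _ = 1 - η * γ * μ := by ring
    _ ≤ 1 - η * γ * L := by gcongr
    _ = 1 - γ ^ 2 * L ^ 2 / (γ ^ 2 * M ^ 2 + M) := by rw [hηγL]

theorem sqrt_one_sub_pow_mul_le {x r ε : ℝ} {T : ℕ} (hx : 0 < x) (hε : 0 < ε)
    (hT : 2 / x * Real.log (r / ε) ≤ T) : √(1 - x) ^ T * r ≤ ε := by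
  rcases le_or_gt r 0 with hr | hr
  · exact (mul_nonpos_of_nonneg_of_nonpos (by positivity) hr).trans hε.le
  have hlog : Real.log (r / ε) ≤ x / 2 * T := by
    calc Real.log (r / ε) = x / 2 * (2 / x * Real.log (r / ε)) := by field_simp
      _ ≤ x / 2 * T := by gcongr
  have hsqrt : √(1 - x) ≤ Real.exp (-x / 2) := by
    rw [Real.exp_half]
    exact Real.sqrt_le_sqrt (Real.one_sub_le_exp_neg x)
  calc √(1 - x) ^ T * r ≤ Real.exp (-x / 2) ^ T * r := by gcongr
    _ = Real.exp (-(x / 2 * T)) * r := by rw [← Real.exp_nat_mul]; ring_nf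
    _ ≤ Real.exp (-Real.log (r / ε)) * r := by gcongr
    _ = ε := by rw [Real.exp_neg, Real.exp_log (by positivity)]; field_simp

theorem stmt15 {p : ℕ} (C : Matrix (Fin p) (Fin p) ℝ) (hC : C.rank = p) (γ η r ε : ℝ)
    (hγ : 0 < γ) (hε : 0 < ε)
    (hη : η = γ * lamMin (C * Cᵀ) / (lamMax (C * Cᵀ) + γ ^ 2 * lamMax (C * Cᵀ) ^ 2))
    (K : Matrix (Fin p ⊕ Fin p) (Fin p ⊕ Fin p) ℝ)
    (hK : K = fromBlocks (1 - (η * γ) • (C * Cᵀ)) (-(η • C))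
      (η • Cᵀ) (1 - (η * γ) • (Cᵀ * C)))
    (z : ℕ → EuclideanSpace ℝ (Fin p ⊕ Fin p))
    (hz : ∀ t, z (t + 1) = toEuclideanCLM (𝕜 := ℝ) K (z t))
    (h0 : ‖z 0‖ ≤ r) :
    ∀ T : ℕ,
      ⌈2 * ((γ ^ 2 * lamMax (C * Cᵀ) ^ 2 + lamMax (C * Cᵀ)) / (γ ^ 2 * lamMin (C * Cᵀ) ^ 2)) *
        Real.log (r / ε)⌉ ≤ (T : ℤ) → ‖z T‖ ≤ ε := by
  intro T hT
  rcases isEmpty_or_nonempty (Fin p) with hp | hp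
  · simp [Subsingleton.elim (z T) 0, hε.le]
  set L := lamMin (C * Cᵀ)
  set M := lamMax (C * Cᵀ)
  have hA : (C * Cᵀ).PosDef := by
    simpa using PosDef.mul_conjTranspose_self C
      (vecMul_injective_iff_isUnit.mpr (isUnit_of_rank_eq_card (by simpa using hC)))
  have hL : 0 < L := hA.lamMin_pos
  have hM : 0 < M := hL.trans_le (spectrum_subset_Icc_lamMin_lamMax _ hA.1.lamMin_mem_spectrum).2
  have hstep (μ) (hμ : μ ∈ spectrum ℝ (C * Cᵀ)) :=
    one_sub_mul_sq_add_sq_mul_le hγ hL (spectrum_subset_Icc_lamMin_lamMax _ hμ).1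
      (spectrum_subset_Icc_lamMin_lamMax _ hμ).2 hη
  have hKnorm : opNorm K ≤ √(1 - γ ^ 2 * L ^ 2 / (γ ^ 2 * M ^ 2 + M)) :=
    hK ▸ opNorm_fromBlocks_le_sqrt C hstep (spectrum_mul_comm Cᵀ C ▸ hstep)
  have hrate : 2 / (γ ^ 2 * L ^ 2 / (γ ^ 2 * M ^ 2 + M)) * Real.log (r / ε) ≤ T := by
    rw [div_div_eq_mul_div, mul_div_assoc]
    exact_mod_cast Int.ceil_le.mp hT
  calc ‖z T‖ ≤ opNorm K ^ T * ‖z 0‖ :=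
        (toEuclideanCLM (𝕜 := ℝ) K).norm_orbit_le_opNorm_pow_mul hz T
    _ ≤ √(1 - γ ^ 2 * L ^ 2 / (γ ^ 2 * M ^ 2 + M)) ^ T * r := by
      gcongr
      exact norm_nonneg _
    _ ≤ ε := sqrt_one_sub_pow_mul_le (by positivity) hε hrate
end
end
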